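/- arXiv:2507.17073 — 2 statements merged into one kernel-verified Lean document; each statement's English description precedes it below -/
import Mathlib

section
/- The map β ↦ m(β) is strictly increasing on [1, ∞), where m(β) denotes the largest solution of tanh(βx) = x. -/
/-- `m β` is the largest solution of the Curie-Weiss equation `tanh (β * x) = x`. -/
noncomputable def cwM (β : ℝ) : ℝ := sSup {x : ℝ | Real.tanh (β * x) = x}

/-!
`tanh` is strictly increasing, bounded by `1`, and strictly concave on `[0, ∞)`, so `tanh y / y`
is strictly decreasing for `y > 0`. If `m = m(b) > 0`, then `tanh (b x) < x` for every `x > m`,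
while for `a ≤ b` and `x > 0` a solution of `tanh (a x) = x` satisfies `x ≤ tanh (b x)`; hence
`m(a) ≤ m(b)`. Equality is excluded because `tanh (a m) < tanh (b m) = m` when `a < b`. For
`b > 1` a positive solution exists by the intermediate value theorem, since `tanh (b x) - x` has
slope `b - 1 > 0` at `0` and is negative at `x = 1`.
-/

open Real Set Filter Topology

namespace Real

theorem hasDerivAt_tanh (x : ℝ) : HasDerivAt tanh (1 - tanh x ^ 2) x := by
  have hcosh : cosh x ≠ 0 := (cosh_pos x).ne'
  have h := (hasDerivAt_sinh x).div (hasDerivAt_cosh x) hcosh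
  rw [show sinh / cosh = tanh from funext fun y => (tanh_eq_sinh_div_cosh y).symm] at h
  refine h.congr_deriv ?_
  rw [tanh_eq_sinh_div_cosh]
  field_simp

theorem continuous_tanh : Continuous tanh :=
  continuous_iff_continuousAt.2 fun x => (hasDerivAt_tanh x).continuousAt

theorem deriv_tanh : deriv tanh = fun x => 1 - tanh x ^ 2 :=
  funext fun x => (hasDerivAt_tanh x).deriv

theorem strictMono_tanh : StrictMono tanh :=
  strictMono_of_hasDerivAt_pos hasDerivAt_tanh fun x => sub_pos.2 (tanh_sq_lt_one x)

theorem tanh_pos {x : ℝ} (hx : 0 < x) : 0 < tanh x := by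
  simpa using strictMono_tanh hx

theorem strictConcaveOn_tanh : StrictConcaveOn ℝ (Ici 0) tanh := by
  refine StrictAntiOn.strictConcaveOn_of_deriv (convex_Ici 0) continuous_tanh.continuousOn ?_
  rw [interior_Ici, deriv_tanh]
  intro x hx y hy hxy
  have := pow_lt_pow_left₀ (strictMono_tanh hxy) (tanh_pos hx).le two_ne_zero
  simp only
  linarith

theorem tanh_div_lt_tanh_div {u v : ℝ} (hu : 0 < u) (huv : u < v) :
    tanh v / v < tanh u / u := by
  simpa [tanh_zero] using
    strictConcaveOn_tanh.secant_strict_mono self_mem_Ici hu.le (hu.trans huv).le hu.ne'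
      (hu.trans huv).ne' huv

end Real

section CurieWeiss

variable {β a b x m : ℝ}

theorem bddAbove_setOf_tanh_mul_eq (β : ℝ) : BddAbove {x : ℝ | tanh (β * x) = x} :=
  ⟨1, fun x (hx : tanh (β * x) = x) => hx ▸ (tanh_lt_one _).le⟩

theorem tanh_mul_cwM (β : ℝ) : tanh (β * cwM β) = cwM β := by
  have hclosed : IsClosed {x : ℝ | tanh (β * x) = x} :=
    isClosed_eq (continuous_tanh.comp (continuous_const_mul β)) continuous_id
  exact hclosed.csSup_mem ⟨0, by simp⟩ (bddAbove_setOf_tanh_mul_eq β)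

theorem le_cwM (hx : tanh (β * x) = x) : x ≤ cwM β :=
  le_csSup (bddAbove_setOf_tanh_mul_eq β) hx

theorem exists_pos_lt_tanh_mul (hβ : 1 < β) : ∃ x, 0 < x ∧ x < tanh (β * x) := by
  set g : ℝ → ℝ := fun x => tanh (β * x) - x
  have hg : HasDerivAt g ((1 - tanh (β * 0) ^ 2) * (β * 1) - 1) 0 :=
    ((hasDerivAt_tanh (β * 0)).comp 0 ((hasDerivAt_id' 0).const_mul β)).sub (hasDerivAt_id' 0)
  have hsign := eventually_nhdsWithin_sign_eq_of_deriv_pos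
    (by rw [hg.deriv]; simpa using hβ) (by simp [g])
  obtain ⟨x, hx, hx0⟩ :=
    ((hsign.filter_mono (nhdsWithin_le_nhds (s := Ioi 0))).and self_mem_nhdsWithin).exists
  refine ⟨x, hx0, ?_⟩
  simp only [sub_zero, sign_pos (show (0 : ℝ) < x from hx0), sign_eq_one_iff, g] at hx
  linarith

theorem exists_pos_tanh_mul_eq (hβ : 1 < β) : ∃ x, 0 < x ∧ tanh (β * x) = x := by
  obtain ⟨x, hx0, hx⟩ := exists_pos_lt_tanh_mul hβ
  have hx1 : x ≤ 1 := hx.le.trans (tanh_lt_one _).le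
  have hcont : ContinuousOn (fun y => tanh (β * y) - y) (Icc x 1) :=
    ((continuous_tanh.comp (continuous_const_mul β)).sub continuous_id).continuousOn
  obtain ⟨y, hy, hy0⟩ := intermediate_value_Icc' hx1 hcont
    (show (0 : ℝ) ∈ Icc _ _ from ⟨by linarith [tanh_lt_one (β * 1)], by linarith⟩)
  exact ⟨y, hx0.trans_le hy.1, sub_eq_zero.1 hy0⟩

theorem cwM_pos (hβ : 1 < β) : 0 < cwM β := by
  obtain ⟨x, hx0, hx⟩ := exists_pos_tanh_mul_eq hβ
  exact hx0.trans_le (le_cwM hx)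

theorem tanh_mul_lt_self_of_lt (hb : 0 < b) (hm : 0 < m) (hsol : tanh (b * m) = m) (hmx : m < x) :
    tanh (b * x) < x := by
  have hbm : 0 < b * m := mul_pos hb hm
  have h := tanh_div_lt_tanh_div hbm (mul_lt_mul_of_pos_left hmx hb)
  rw [hsol, div_lt_div_iff₀ (hbm.trans (mul_lt_mul_of_pos_left hmx hb)) hbm] at h
  nlinarith

theorem cwM_le_cwM (hab : a ≤ b) (hb : 1 < b) : cwM a ≤ cwM b := by
  have hm := cwM_pos hb
  refine csSup_le ⟨0, by simp⟩ fun x (hx : tanh (a * x) = x) => ?_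
  by_contra! hmx
  have hx0 : 0 < x := hm.trans hmx
  have hmono : tanh (a * x) ≤ tanh (b * x) :=
    strictMono_tanh.monotone (mul_le_mul_of_nonneg_right hab hx0.le)
  linarith [tanh_mul_lt_self_of_lt (by linarith) hm (tanh_mul_cwM b) hmx]

theorem cwM_lt_cwM (hab : a < b) (hb : 1 < b) : cwM a < cwM b := by
  refine (cwM_le_cwM hab.le hb).lt_of_ne fun h => ?_
  have hlt := strictMono_tanh (mul_lt_mul_of_pos_right hab (cwM_pos hb))
  rw [tanh_mul_cwM b, ← h, tanh_mul_cwM a] at hlt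
  exact hlt.false

end CurieWeiss

theorem stmt_1 : StrictMonoOn cwM (Set.Ici (1 : ℝ)) :=
  fun _ ha _ _ hab => cwM_lt_cwM hab (lt_of_le_of_lt ha hab)
end

section
/- Let F(z) = z²/(2β) − ln cosh z with β > 1. Then F has exactly three critical points: −artanh(m(β)), 0, and artanh(m(β)); z = 0 is a local maximum and ±artanh(m(β)) are the global minima, where m(β) is the unique positive solution of tanh(βx) = x. -/
/-- The inverse hyperbolic tangent, `artanh x = (1/2) ln ((1+x)/(1−x))`. -/
noncomputable def artanh (x : ℝ) : ℝ := (1 / 2) * Real.log ((1 + x) / (1 - x))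

/-- The function `F z = z² / (2β) − ln (cosh z)`. -/
noncomputable def cwF (β z : ℝ) : ℝ := z ^ 2 / (2 * β) - Real.log (Real.cosh z)

/-! The critical points of `cwF β` are the zeros of `tanh z - z / β`; this function is odd and
strictly concave on `[0, ∞)`, so it has at most one positive zero `a`, being positive on `(0, a)`
and negative on `(a, ∞)`. For `β > 1` its slope `1 - 1/β` at the origin is positive while it is
negative on `[β, ∞)`, so the zero `a` exists. Hence `cwF β` decreases on `[0, a]` and increases
on `[a, ∞)`, and by evenness `0` is a local maximum and `±a` are the global minima. Finally,
as `tanh a = a / β`, `tanh a` solves `tanh (β x) = x`, and every positive solution `x` makes `β x`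
a positive zero, so `m(β) = tanh a` and `artanh m(β) = a`. -/

theorem artanh_tanh (x : ℝ) : artanh (Real.tanh x) = x := by
  rw [artanh, ← Real.artanh_eq_half_log ⟨(Real.neg_one_lt_tanh x).le, (Real.tanh_lt_one x).le⟩,
    Real.artanh_tanh]

section

open Real Set Filter Topology

theorem Real.hasDerivAt_tanh_s6 (x : ℝ) : HasDerivAt tanh (cosh x ^ 2)⁻¹ x := by
  rw [show tanh = fun y => sinh y / cosh y from funext tanh_eq_sinh_div_cosh]
  refine ((hasDerivAt_sinh x).div (hasDerivAt_cosh x) (cosh_pos x).ne').congr_deriv ?_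
  rw [inv_eq_one_div, ← cosh_sq_sub_sinh_sq x]
  ring

theorem Real.continuous_tanh_s6 : Continuous tanh :=
  continuous_iff_continuousAt.2 fun x => (hasDerivAt_tanh_s6 x).continuousAt

theorem Real.strictConcaveOn_tanh_s6 : StrictConcaveOn ℝ (Ici 0) tanh := by
  refine StrictAntiOn.strictConcaveOn_of_deriv (convex_Ici 0) continuous_tanh_s6.continuousOn ?_
  rw [interior_Ici]
  intro x hx y hy hxy
  rw [(hasDerivAt_tanh_s6 x).deriv, (hasDerivAt_tanh_s6 y).deriv]
  have hcosh : cosh x < cosh y := cosh_strictMonoOn (mem_Ioi.1 hx).le (mem_Ioi.1 hy).le hxy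
  have := cosh_pos x
  gcongr

noncomputable def cwG (β z : ℝ) : ℝ := tanh z - z / β

variable {β : ℝ}

theorem hasDerivAt_cwG (β z : ℝ) : HasDerivAt (cwG β) ((cosh z ^ 2)⁻¹ - β⁻¹) z := by
  have h := (hasDerivAt_tanh_s6 z).sub ((hasDerivAt_id z).div_const β)
  rwa [one_div] at h

theorem continuous_cwG (β : ℝ) : Continuous (cwG β) :=
  continuous_tanh_s6.sub (continuous_id.div_const β)

theorem cwG_zero (β : ℝ) : cwG β 0 = 0 := by simp [cwG]

theorem cwG_neg (β z : ℝ) : cwG β (-z) = -cwG β z := by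
  simp only [cwG, tanh_neg, neg_div]
  ring

theorem cwG_abs_eq_zero_iff {z : ℝ} : cwG β |z| = 0 ↔ cwG β z = 0 := by
  rcases abs_choice z with h | h <;> simp [h, cwG_neg]

theorem strictConcaveOn_cwG (β : ℝ) : StrictConcaveOn ℝ (Ici 0) (cwG β) :=
  strictConcaveOn_tanh_s6.sub_convexOn
    ⟨convex_Ici 0, fun x _ y _ a b _ _ _ => le_of_eq (by simp only [smul_eq_mul]; ring)⟩

theorem cwG_pos_of_lt {p q : ℝ} (hp : 0 < p) (hpq : p < q) (hq : 0 ≤ cwG β q) :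
    0 < cwG β p := by
  have hq0 : 0 < q := hp.trans hpq
  have hseg : p ∈ openSegment ℝ 0 q := by
    rw [openSegment_eq_Ioo hq0]
    exact ⟨hp, hpq⟩
  have h := (strictConcaveOn_cwG β).lt_on_openSegment self_mem_Ici hq0.le hq0.ne hseg
  rwa [cwG_zero, min_eq_left hq] at h

theorem cwG_neg_of_lt {a z : ℝ} (ha : 0 < a) (hGa : cwG β a = 0) (haz : a < z) :
    cwG β z < 0 :=
  not_le.1 fun hz => (cwG_pos_of_lt ha haz hz).ne' hGa

theorem eq_of_cwG_eq_zero {x y : ℝ} (hx : 0 < x) (hy : 0 < y) (hGx : cwG β x = 0)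
    (hGy : cwG β y = 0) : x = y := by
  rcases lt_trichotomy x y with h | h | h
  · exact absurd hGx (cwG_pos_of_lt hx h hGy.ge).ne'
  · exact h
  · exact absurd hGy (cwG_pos_of_lt hy h hGx.ge).ne'

theorem cwG_neg_of_le (hβ : 0 < β) {z : ℝ} (hz : β ≤ z) : cwG β z < 0 := by
  rw [cwG, sub_neg]
  exact (tanh_lt_one z).trans_le ((one_le_div hβ).2 hz)

theorem exists_pos_cwG_pos (hβ : 1 < β) : ∃ z, 0 < z ∧ 0 < cwG β z := by
  have hslope : 0 < deriv (cwG β) 0 := by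
    rw [(hasDerivAt_cwG β 0).deriv, cosh_zero, one_pow, inv_one, sub_pos]
    exact inv_lt_one_of_one_lt₀ hβ
  obtain ⟨z, hsign, hz⟩ := ((eventually_nhdsWithin_of_eventually_nhds
    (eventually_nhdsWithin_sign_eq_of_deriv_pos hslope (cwG_zero β))).and
    (self_mem_nhdsWithin : Ioi (0 : ℝ) ∈ 𝓝[>] 0)).exists
  refine ⟨z, hz, ?_⟩
  rw [sub_zero, sign_pos (show (0 : ℝ) < z from hz)] at hsign
  exact sign_eq_one_iff.1 hsign

theorem exists_pos_cwG_eq_zero (hβ : 1 < β) : ∃ a, 0 < a ∧ cwG β a = 0 := by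
  obtain ⟨z, hz, hGz⟩ := exists_pos_cwG_pos hβ
  obtain ⟨a, ha, hGa⟩ := intermediate_value_Icc' (le_max_left z β) (continuous_cwG β).continuousOn
    ⟨(cwG_neg_of_le (by linarith) (le_max_right z β)).le, hGz.le⟩
  exact ⟨a, hz.trans_le ha.1, hGa⟩

theorem cwM_eq_tanh (hβ : 0 < β) {a : ℝ} (ha : 0 < a) (hGa : cwG β a = 0) :
    cwM β = tanh a := by
  have hfix : ∀ x, tanh (β * x) = x ↔ cwG β (β * x) = 0 := fun x => by
    rw [cwG, mul_div_cancel_left₀ x hβ.ne', sub_eq_zero]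
  have htanh : tanh a = a / β := sub_eq_zero.1 hGa
  refine IsGreatest.csSup_eq ⟨?_, fun x hx => ?_⟩
  · rw [mem_ofPred_eq, hfix, htanh, mul_div_cancel₀ a hβ.ne', hGa]
  · rcases le_or_gt x 0 with hx0 | hx0
    · exact hx0.trans (htanh ▸ (div_pos ha hβ).le)
    · refine le_of_eq ?_
      rw [htanh, eq_div_iff hβ.ne', mul_comm]
      exact eq_of_cwG_eq_zero (mul_pos hβ hx0) ha ((hfix x).1 hx) hGa

theorem hasDerivAt_cwF (β z : ℝ) : HasDerivAt (cwF β) (-cwG β z) z := by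
  have hsq : HasDerivAt (fun z : ℝ => z ^ 2 / (2 * β)) (z / β) z := by
    refine ((hasDerivAt_pow 2 z).div_const (2 * β)).congr_deriv ?_
    rw [Nat.cast_ofNat, pow_one, mul_div_mul_left z β two_ne_zero]
  have hlog : HasDerivAt (fun z : ℝ => log (cosh z)) (tanh z) z := by
    simpa [← tanh_eq_sinh_div_cosh] using (hasDerivAt_cosh z).log (cosh_pos z).ne'
  refine (hsq.sub hlog).congr_deriv ?_
  rw [cwG]
  ring

theorem continuous_cwF (β : ℝ) : Continuous (cwF β) :=
  continuous_iff_continuousAt.2 fun z => (hasDerivAt_cwF β z).continuousAt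

theorem cwF_abs (β z : ℝ) : cwF β |z| = cwF β z := by
  simp only [cwF, sq_abs, cosh_abs]

theorem cwF_neg (β z : ℝ) : cwF β (-z) = cwF β z := by
  rw [← cwF_abs, abs_neg, cwF_abs]

theorem strictAntiOn_cwF {a : ℝ} (hGa : 0 ≤ cwG β a) : StrictAntiOn (cwF β) (Icc 0 a) := by
  refine strictAntiOn_of_deriv_neg (convex_Icc 0 a) (continuous_cwF β).continuousOn fun x hx => ?_
  rw [interior_Icc] at hx
  rw [(hasDerivAt_cwF β x).deriv, neg_neg_iff_pos]
  exact cwG_pos_of_lt hx.1 hx.2 hGa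

theorem strictMonoOn_cwF {a : ℝ} (ha : 0 < a) (hGa : cwG β a = 0) :
    StrictMonoOn (cwF β) (Ici a) := by
  refine strictMonoOn_of_deriv_pos (convex_Ici a) (continuous_cwF β).continuousOn fun x hx => ?_
  rw [interior_Ici] at hx
  rw [(hasDerivAt_cwF β x).deriv, neg_pos]
  exact cwG_neg_of_lt ha hGa hx

theorem isLocalMax_cwF_zero {a : ℝ} (ha : 0 < a) (hGa : 0 ≤ cwG β a) : IsLocalMax (cwF β) 0 := by
  filter_upwards [Ioo_mem_nhds (neg_lt_zero.2 ha) ha] with z hz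
  rw [← cwF_abs]
  exact (strictAntiOn_cwF hGa).antitoneOn ⟨le_rfl, ha.le⟩ ⟨abs_nonneg z, (abs_lt.2 hz).le⟩
    (abs_nonneg z)

theorem cwF_root_le {a : ℝ} (ha : 0 < a) (hGa : cwG β a = 0) (z : ℝ) : cwF β a ≤ cwF β z := by
  rw [← cwF_abs β z]
  rcases le_total |z| a with hz | hz
  · exact (strictAntiOn_cwF hGa.ge).antitoneOn ⟨abs_nonneg z, hz⟩ ⟨ha.le, le_rfl⟩ hz
  · exact (strictMonoOn_cwF ha hGa).monotoneOn self_mem_Ici hz hz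

theorem setOf_deriv_cwF_eq_zero {a : ℝ} (ha : 0 < a) (hGa : cwG β a = 0) :
    {z | deriv (cwF β) z = 0} = {-a, 0, a} := by
  ext z
  rw [mem_ofPred_eq, (hasDerivAt_cwF β z).deriv, neg_eq_zero, ← cwG_abs_eq_zero_iff]
  simp only [mem_insert_iff, mem_singleton_iff]
  constructor
  · intro hz
    rcases (abs_nonneg z).eq_or_lt with h0 | hpos
    · exact Or.inr (Or.inl (abs_eq_zero.1 h0.symm))
    · rcases (abs_eq ha.le).1 (eq_of_cwG_eq_zero hpos ha hz hGa) with h | h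
      · exact Or.inr (Or.inr h)
      · exact Or.inl h
  · rintro (rfl | rfl | rfl)
    · rwa [abs_neg, abs_of_pos ha]
    · rw [abs_zero, cwG_zero]
    · rwa [abs_of_pos ha]

end

theorem stmt_6 (β : ℝ) (hβ : 1 < β) :
    {z : ℝ | deriv (cwF β) z = 0}
        = {-artanh (cwM β), 0, artanh (cwM β)} ∧
      IsLocalMax (cwF β) 0 ∧
      (∀ z : ℝ, cwF β (artanh (cwM β)) ≤ cwF β z) ∧
      cwF β (-artanh (cwM β)) = cwF β (artanh (cwM β)) := by
  obtain ⟨a, ha, hGa⟩ := exists_pos_cwG_eq_zero hβ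
  rw [cwM_eq_tanh (zero_lt_one.trans hβ) ha hGa, artanh_tanh]
  exact ⟨setOf_deriv_cwF_eq_zero ha hGa, isLocalMax_cwF_zero ha hGa.ge, cwF_root_le ha hGa,
    cwF_neg β a⟩
end
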